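/- Let T^0 and T^a be nonnegative random variables such that S_{T^0}(t) = P(T^0 > t) is continuous and strictly decreasing with S_{T^0}(0) = 1, S_{T^0}(t) > 0 and S_{T^0}(t) → 0 as t → ∞, and assume S_{T^a}(t) > 0 for all t > 0. Define θ(t) = (1/t)·sup{s : S_{T^0}(s) ≥ S_{T^a}(t)}. Then E[T^a] = ∫_0^∞ S_{T^0}(t·θ(t)) dt (both sides possibly infinite); consequently, if 0 < E[T^0] < ∞ and E[T^a] < ∞, then E[T^a]/E[T^0] = (∫_0^∞ S_{T^0}(t·θ(t)) dt) / (∫_0^∞ S_{T^0}(t) dt). -/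

import Mathlib

/-!
By the layer-cake formula `E[X] = ∫_0^∞ S_X(t) dt` for a nonnegative `X`, the claim reduces to
`S_{T⁰}(t θ(t)) = S_{Tᵃ}(t)` for `t > 0`, i.e. to `S_{T⁰} ∘ S_{T⁰}⁻¹ = id` on `(0, 1]`. The latter
holds because `{s ≥ 0 | p ≤ S(s)}` is closed and bounded, so its supremum `s*` belongs to it, and
`S(s*) > p` is impossible: the intermediate value theorem between `s*` and a point where `S < p`
would produce a larger element.
-/

open MeasureTheory ProbabilityTheory Filter Set Topology

noncomputable def survivalInv (S : ℝ → ℝ) (p : ℝ) : ℝ :=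
  sSup {s : ℝ | 0 ≤ s ∧ p ≤ S s}

theorem apply_survivalInv {S : ℝ → ℝ} (hcont : ContinuousOn S (Ici 0))
    (hlim : Tendsto S atTop (𝓝 0)) {p : ℝ} (hp : 0 < p) (hpS : p ≤ S 0) :
    S (survivalInv S p) = p := by
  set A := {s : ℝ | 0 ≤ s ∧ p ≤ S s}
  obtain ⟨N, hN⟩ := eventually_atTop.1 (hlim.eventually_lt_const hp)
  have hA : ∀ s ∈ A, s < N := fun s hs => not_le.1 fun hNs => (hN s hNs).not_ge hs.2
  have hbdd : BddAbove A := ⟨N, fun s hs => (hA s hs).le⟩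
  have hclosed : IsClosed A := hcont.preimage_isClosed_of_isClosed isClosed_Ici isClosed_Ici
  have hmem : survivalInv S p ∈ A := hclosed.csSup_mem ⟨0, le_rfl, hpS⟩ hbdd
  have hsN : survivalInv S p ≤ N := (hA _ hmem).le
  obtain ⟨hs0, hsp⟩ := hmem
  obtain ⟨c, ⟨hsc, -⟩, hSc⟩ := intermediate_value_Icc' hsN
    (hcont.mono fun x hx => hs0.trans hx.1) ⟨(hN N le_rfl).le, hsp⟩
  have hcs : c ≤ survivalInv S p := le_csSup hbdd ⟨hs0.trans hsc, hSc.ge⟩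
  rwa [le_antisymm hcs hsc] at hSc

theorem lintegral_ofReal_eq_setLIntegral_survival {Ω : Type*} [MeasurableSpace Ω]
    {μ : Measure Ω} [IsFiniteMeasure μ] {X : Ω → ℝ} (hX : 0 ≤ᵐ[μ] X) (hXm : AEMeasurable X μ)
    {S : ℝ → ℝ} (hS : ∀ t, S t = (μ {ω | t < X ω}).toReal) :
    ∫⁻ ω, ENNReal.ofReal (X ω) ∂μ = ∫⁻ t in Ioi 0, ENNReal.ofReal (S t) := by
  rw [lintegral_eq_lintegral_meas_lt μ hX hXm]
  refine setLIntegral_congr_fun measurableSet_Ioi fun t _ => ?_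
  rw [hS, ENNReal.ofReal_toReal (measure_ne_top μ _)]

theorem mean_ratio_identification_general
    {Ω : Type*} [MeasurableSpace Ω] (P : Measure Ω) [IsProbabilityMeasure P]
    (T0 Ta : Ω → ℝ) (hT0 : Measurable T0) (hTa : Measurable Ta)
    (hT0nn : ∀ ω, 0 ≤ T0 ω) (hTann : ∀ ω, 0 ≤ Ta ω)
    (S0 Sa : ℝ → ℝ)
    (hS0 : ∀ t, S0 t = (P {ω | t < T0 ω}).toReal)
    (hSa : ∀ t, Sa t = (P {ω | t < Ta ω}).toReal)
    (hcont : ContinuousOn S0 (Ici 0))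
    (hS00 : S0 0 = 1)
    (hlim : Tendsto S0 atTop (nhds 0))
    (hSapos : ∀ t, 0 < t → 0 < Sa t)
    (θ : ℝ → ℝ)
    (hθ : ∀ t, 0 < t → θ t = (1 / t) * sSup {s : ℝ | 0 ≤ s ∧ Sa t ≤ S0 s}) :
    (∫⁻ ω, ENNReal.ofReal (Ta ω) ∂P)
      = (∫⁻ t in Ioi (0 : ℝ), ENNReal.ofReal (S0 (t * θ t))) ∧
    (0 < (∫⁻ ω, ENNReal.ofReal (T0 ω) ∂P) →
      (∫⁻ ω, ENNReal.ofReal (T0 ω) ∂P) < ⊤ →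
      (∫⁻ ω, ENNReal.ofReal (Ta ω) ∂P) < ⊤ →
      (∫⁻ ω, ENNReal.ofReal (Ta ω) ∂P).toReal / (∫⁻ ω, ENNReal.ofReal (T0 ω) ∂P).toReal
        = (∫⁻ t in Ioi (0 : ℝ), ENNReal.ofReal (S0 (t * θ t))).toReal
          / (∫⁻ t in Ioi (0 : ℝ), ENNReal.ofReal (S0 t)).toReal) := by
  have hS0θ : ∀ t ∈ Ioi (0 : ℝ), S0 (t * θ t) = Sa t := fun t ht => by
    have htθ : t * θ t = survivalInv S0 (Sa t) := by
      rw [hθ t ht, survivalInv, one_div, mul_inv_cancel_left₀ (ne_of_gt ht)]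
    have hSa1 : Sa t ≤ S0 0 := hS00 ▸ hSa t ▸ measureReal_le_one
    rw [htθ, apply_survivalInv hcont hlim (hSapos t ht) hSa1]
  have hEa : ∫⁻ ω, ENNReal.ofReal (Ta ω) ∂P = ∫⁻ t in Ioi 0, ENNReal.ofReal (S0 (t * θ t)) := by
    rw [lintegral_ofReal_eq_setLIntegral_survival (.of_forall hTann) hTa.aemeasurable hSa]
    exact setLIntegral_congr_fun measurableSet_Ioi fun t ht => by rw [hS0θ t ht]
  have hE0 := lintegral_ofReal_eq_setLIntegral_survival (.of_forall hT0nn) hT0.aemeasurable hS0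
  exact ⟨hEa, fun _ _ _ => by rw [hEa, hE0]⟩

/-- Equation (9) of Lemma 1 in the paper: with `θ(t) = (1/t)·S_{T⁰}⁻¹(S_{Tᵃ}(t))`, one has
`E[Tᵃ] = ∫_0^∞ S_{T⁰}(t·θ(t)) dt` (possibly infinite); consequently, when `0 < E[T⁰] < ∞`
and `E[Tᵃ] < ∞`, the ratio of expected survival times is
`E[Tᵃ]/E[T⁰] = (∫_0^∞ S_{T⁰}(t·θ(t)) dt)/(∫_0^∞ S_{T⁰}(t) dt)`. -/
theorem mean_ratio_identification
    {Ω : Type*} [MeasurableSpace Ω] (P : Measure Ω) [IsProbabilityMeasure P]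
    (T0 Ta : Ω → ℝ) (hT0 : Measurable T0) (hTa : Measurable Ta)
    (hT0nn : ∀ ω, 0 ≤ T0 ω) (hTann : ∀ ω, 0 ≤ Ta ω)
    (S0 Sa : ℝ → ℝ)
    (hS0 : ∀ t, S0 t = (P {ω | t < T0 ω}).toReal)
    (hSa : ∀ t, Sa t = (P {ω | t < Ta ω}).toReal)
    (hcont : ContinuousOn S0 (Ici 0)) (hanti : StrictAntiOn S0 (Ici 0))
    (hS00 : S0 0 = 1) (hpos : ∀ t, 0 ≤ t → 0 < S0 t)
    (hlim : Tendsto S0 atTop (nhds 0))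
    (hSapos : ∀ t, 0 < t → 0 < Sa t)
    (θ : ℝ → ℝ)
    (hθ : ∀ t, 0 < t → θ t = (1 / t) * sSup {s : ℝ | 0 ≤ s ∧ Sa t ≤ S0 s}) :
    (∫⁻ ω, ENNReal.ofReal (Ta ω) ∂P)
      = (∫⁻ t in Ioi (0 : ℝ), ENNReal.ofReal (S0 (t * θ t))) ∧
    (0 < (∫⁻ ω, ENNReal.ofReal (T0 ω) ∂P) →
      (∫⁻ ω, ENNReal.ofReal (T0 ω) ∂P) < ⊤ →
      (∫⁻ ω, ENNReal.ofReal (Ta ω) ∂P) < ⊤ →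
      (∫⁻ ω, ENNReal.ofReal (Ta ω) ∂P).toReal / (∫⁻ ω, ENNReal.ofReal (T0 ω) ∂P).toReal
        = (∫⁻ t in Ioi (0 : ℝ), ENNReal.ofReal (S0 (t * θ t))).toReal
          / (∫⁻ t in Ioi (0 : ℝ), ENNReal.ofReal (S0 t)).toReal) :=
  mean_ratio_identification_general P T0 Ta hT0 hTa hT0nn hTann S0 Sa hS0 hSa hcont hS00 hlim hSapos
    θ hθ
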